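/- arXiv:1201.3543 — 3 statements merged into one kernel-verified Lean document; each statement's English description precedes it below -/
import Mathlib

section
/- For every pseudo-Boolean function f: {0,1}^n → ℝ and every S ⊆ N, the Banzhaf interaction index satisfies I_B(f,S) = 2^{|S|} ⟨f, v_S⟩, where v_S(x) = Π_{i∈S}(2x_i − 1) and ⟨f,g⟩ = 2^{-n} Σ_{x∈{0,1}^n} f(x)g(x). -/
open Finset

/-- The discrete `S`-derivative (difference) of a set function:
`Δ_S f (T) = Σ_{R⊆S} (−1)^{|S|−|R|} f(T∪R)`, the closed form of the recursion
`Δ_∅ f = f`, `Δ_{{i}} f(x) = f(x|x_i=1) − f(x|x_i=0)`, `Δ_S f = Δ_{{i}} Δ_{S∖{i}} f`. -/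
noncomputable def deltaD {n : ℕ} (S : Finset (Fin n)) (f : Finset (Fin n) → ℝ) (T : Finset (Fin n)) : ℝ :=
  ∑ R ∈ S.powerset, (-1 : ℝ) ^ (S.card - R.card) * f (T ∪ R)

/-- The Banzhaf interaction index `I_B(f,S) = 2^{-(n-|S|)} Σ_{T⊆N∖S} (Δ_S f)(T)`. -/
noncomputable def banzhafInteraction {n : ℕ} (f : Finset (Fin n) → ℝ) (S : Finset (Fin n)) : ℝ :=
  (1 / 2 ^ (n - S.card)) * ∑ T ∈ (univ \ S).powerset, deltaD S f T
/-!
Every `X ⊆ N` splits uniquely as `T ∪ R` with `T ⊆ N ∖ S` and `R ⊆ S`, so the double sum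
`Σ_T Σ_R (−1)^{|S|−|R|} f(T ∪ R)` defining `I_B(f,S)` is a single sum over all `X`, weighted by
`(−1)^{|S ∖ X|} = v_S(X)`. The normalisations match since `2^{-(n-|S|)} = 2^{|S|} 2^{-n}`.
-/

theorem Finset.sum_powerset_union_of_disjoint {α M : Type*} [DecidableEq α] [AddCommMonoid M]
    {s t : Finset α} (hst : Disjoint s t) (g : Finset α → M) :
    ∑ X ∈ (s ∪ t).powerset, g X = ∑ A ∈ s.powerset, ∑ B ∈ t.powerset, g (A ∪ B) := by
  rw [← sum_product']
  refine sum_nbij' (fun X => (X ∩ s, X ∩ t)) (fun p => p.1 ∪ p.2) ?_ ?_ ?_ ?_ ?_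
  · simp only [mem_product, mem_powerset]
    exact fun X _ => ⟨inter_subset_right, inter_subset_right⟩
  · simp only [mem_product, mem_powerset]
    exact fun p hp => union_subset_union hp.1 hp.2
  · intro X hX
    rw [mem_powerset] at hX
    simp only [← inter_union_distrib_left, inter_eq_left.2 hX]
  · rintro ⟨A, B⟩ hAB
    simp only [mem_product, mem_powerset] at hAB
    obtain ⟨hA, hB⟩ := hAB
    simp only [union_inter_distrib_right, inter_eq_left.2 hA, inter_eq_left.2 hB,
      disjoint_iff_inter_eq_empty.1 (hst.mono_right hB).symm,
      disjoint_iff_inter_eq_empty.1 (hst.mono_left hA), union_empty, empty_union]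
  · intro X hX
    rw [mem_powerset] at hX
    simp only [← inter_union_distrib_left, inter_eq_left.2 hX]

theorem prod_two_mul_ite_sub_one {α R : Type*} [DecidableEq α] [CommRing R] (S X : Finset α) :
    ∏ i ∈ S, (2 * (if i ∈ X then (1 : R) else 0) - 1) = (-1) ^ #(S \ X) := by
  simp only [mul_ite, mul_one, mul_zero, ite_sub]
  rw [prod_ite, filter_notMem_eq_sdiff]
  norm_num

theorem sum_deltaD_powerset_compl {n : ℕ} (f : Finset (Fin n) → ℝ) (S : Finset (Fin n)) :
    ∑ T ∈ (univ \ S).powerset, deltaD S f T = ∑ X, f X * (-1) ^ #(S \ X) := by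
  rw [← powerset_univ, ← sdiff_union_of_subset (subset_univ S),
    sum_powerset_union_of_disjoint sdiff_disjoint, sdiff_union_of_subset (subset_univ S)]
  refine sum_congr rfl fun T hT => sum_congr rfl fun R hR => ?_
  rw [mem_powerset, subset_sdiff] at hT
  rw [mem_powerset] at hR
  have hdiff : S \ (T ∪ R) = S \ R := by
    rw [sdiff_union_distrib, sdiff_eq_self_of_disjoint hT.2.symm, inter_eq_right.2 sdiff_subset]
  rw [hdiff, card_sdiff_of_subset hR, mul_comm]

/-- `I_B(f,S) = 2^{|S|} ⟨f, v_S⟩`, where `v_S(x) = Π_{i∈S}(2x_i − 1)` and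
`⟨f,g⟩ = 2^{-n} Σ_{x∈{0,1}^n} f(x)g(x)`. -/
theorem banzhafInteraction_eq_inner (n : ℕ) (f : Finset (Fin n) → ℝ) (S : Finset (Fin n)) :
    banzhafInteraction f S
      = 2 ^ S.card * ((1 / 2 ^ n) * ∑ X : Finset (Fin n),
          f X * ∏ i ∈ S, (2 * (if i ∈ X then (1 : ℝ) else 0) - 1)) := by
  have hS : #S ≤ n := by simpa using card_le_univ S
  simp only [banzhafInteraction, sum_deltaD_powerset_compl, prod_two_mul_ite_sub_one,
    pow_sub₀ (2 : ℝ) two_ne_zero hS]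
  field_simp
end

section
/- For every pseudo-Boolean function f: {0,1}^n → ℝ and every S ⊆ N, the number I_B(f,S) equals the coefficient of u_S (the leading coefficient) in the multilinear expansion of the orthogonal projection f_S of f onto the subspace V_S = span{u_T : T ⊆ S}, where projection is with respect to the inner product ⟨f,g⟩ = 2^{-n} Σ_{x∈{0,1}^n} f(x)g(x). -/
open Finset

/-- The unanimity function `u_T(x) = Π_{i∈T} x_i` on `{0,1}^n`. -/
def unanimity {n : ℕ} (T X : Finset (Fin n)) : ℝ :=
  ∏ i ∈ T, (if i ∈ X then (1 : ℝ) else 0)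

/-! Put `w_S(X) = (-1) ^ |S \ X| = ∏_{i ∈ S} (2 x_i - 1)`. Splitting `X = R ∪ T` with
`R ⊆ S`, `T ⊆ N \ S` shows `I_B(f, S) = 2^{-(n-|S|)} Σ_X w_S(X) f(X)`. Expanding the product
shows that `w_S` lies in `V_S`, and the residual `f - f_S` is orthogonal to `V_S` (normal
equations), so `f` may be replaced by `f_S`. Finally `Σ_X w_S(X) u_T(X)` vanishes for `T ⊊ S`
(an alternating sum over the interval `[T, S]`) and equals `2^{n-|S|}` for `T = S`, which
isolates `c(S)`. -/

section Powerset

variable {ι : Type*} [DecidableEq ι]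

theorem sum_eq_sum_powerset_sum_powerset_compl {M : Type*} [Fintype ι] [AddCommMonoid M]
    (S : Finset ι) (F : Finset ι → M) :
    ∑ X, F X = ∑ P ∈ S.powerset, ∑ Q ∈ Sᶜ.powerset, F (P ∪ Q) := by
  rw [← sum_product']
  refine (sum_nbij' (fun p => p.1 ∪ p.2) (fun X => (X ∩ S, X \ S)) ?_ ?_ ?_ ?_ ?_).symm
  · simp
  · simp [subset_iff]
  · rintro ⟨P, Q⟩ h
    simp only [mem_product, mem_powerset, subset_iff, mem_compl] at h
    ext i <;> simp only [mem_inter, mem_union, mem_sdiff] <;> grind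
  · intro X _
    exact sup_inf_sdiff X S
  · simp

theorem sum_powerset_filter_superset_neg_one_pow {R : Type*} [Ring R] {S T : Finset ι}
    (hTS : T ⊆ S) :
    ∑ P ∈ S.powerset with T ⊆ P, (-1 : R) ^ #(S \ P) = if T = S then 1 else 0 := by
  have hreindex : ∑ P ∈ S.powerset with T ⊆ P, (-1 : R) ^ #(S \ P)
      = ∑ Q ∈ (S \ T).powerset, (-1 : R) ^ #Q := by
    refine sum_nbij' (S \ ·) (S \ ·) ?_ ?_ ?_ ?_ ?_
    · intro P hP
      simp only [mem_filter, mem_powerset] at hP ⊢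
      exact sdiff_subset_sdiff subset_rfl hP.2
    · intro Q hQ
      simp only [mem_filter, mem_powerset] at hQ ⊢
      grind
    · intro P hP
      exact Finset.sdiff_sdiff_eq_self (mem_powerset.mp (mem_filter.mp hP).1)
    · intro Q hQ
      exact Finset.sdiff_sdiff_eq_self ((mem_powerset.mp hQ).trans sdiff_subset)
    · intro P _
      rfl
  have hS : S \ T = ∅ ↔ T = S := by
    rw [sdiff_eq_empty_iff_subset]; exact ⟨fun h => hTS.antisymm h, fun h => h ▸ subset_rfl⟩
  rw [hreindex, ← if_congr hS rfl rfl]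
  exact_mod_cast congrArg (Int.cast : ℤ → R) sum_powerset_neg_one_pow_card

def signWeight (S X : Finset ι) : ℝ :=
  (-1) ^ #(S \ X)

lemma signWeight_union_of_disjoint {S Q : Finset ι}
    (h : Disjoint S Q) (P : Finset ι) : signWeight S (P ∪ Q) = signWeight S P := by
  rw [signWeight, signWeight, sdiff_union_distrib, h.sdiff_eq_left, inter_comm,
    inter_eq_right.mpr sdiff_subset]

lemma signWeight_eq_prod (S X : Finset ι) :
    signWeight S X = ∏ i ∈ S, ((if i ∈ X then 2 else 0) + -1) := by
  have hfactor : ∀ i, ((if i ∈ X then 2 else 0) + -1 : ℝ) = if i ∈ X then 1 else -1 := by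
    intro i; split_ifs <;> norm_num
  simp only [hfactor, prod_ite, prod_const_one, prod_const, one_mul, signWeight,
    filter_notMem_eq_sdiff]

end Powerset

section Unanimity

variable {n : ℕ}

lemma unanimity_eq_ite (T X : Finset (Fin n)) :
    unanimity T X = if T ⊆ X then 1 else 0 := by
  simp [unanimity, prod_boole, subset_iff]

lemma unanimity_union_of_disjoint {T Q : Finset (Fin n)} (h : Disjoint T Q)
    (P : Finset (Fin n)) : unanimity T (P ∪ Q) = unanimity T P := by
  have hsub : T ⊆ P ∪ Q ↔ T ⊆ P :=
    ⟨fun hT => Disjoint.left_le_of_le_sup_right hT h, fun hT => hT.trans subset_union_left⟩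
  simp only [unanimity_eq_ite, hsub]

lemma signWeight_eq_sum_unanimity (S X : Finset (Fin n)) :
    signWeight S X = ∑ T ∈ S.powerset, (-1) ^ #(S \ T) * 2 ^ #T * unanimity T X := by
  have hprod : ∀ T : Finset (Fin n),
      ∏ i ∈ T, (if i ∈ X then 2 else 0 : ℝ) = 2 ^ #T * unanimity T X := by
    intro T
    rw [unanimity, ← prod_const, ← prod_mul_distrib]
    exact prod_congr rfl fun i _ => by split_ifs <;> norm_num
  rw [signWeight_eq_prod, prod_add]
  exact sum_congr rfl fun T _ => by rw [hprod, prod_const]; ring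

lemma banzhafInteraction_eq_sum_signWeight (f : Finset (Fin n) → ℝ) (S : Finset (Fin n)) :
    banzhafInteraction f S = 1 / 2 ^ (n - #S) * ∑ X, signWeight S X * f X := by
  unfold banzhafInteraction deltaD
  rw [sum_eq_sum_powerset_sum_powerset_compl S, sum_comm (s := S.powerset),
    compl_eq_univ_sdiff]
  congr 1
  refine sum_congr rfl fun Q hQ => sum_congr rfl fun P hP => ?_
  rw [union_comm, signWeight_union_of_disjoint, signWeight,
    card_sdiff_of_subset (mem_powerset.mp hP)]
  exact disjoint_of_subset_right (mem_powerset.mp hQ) disjoint_sdiff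

lemma sum_signWeight_mul_unanimity {S T : Finset (Fin n)} (hTS : T ⊆ S) :
    ∑ X, signWeight S X * unanimity T X = if T = S then 2 ^ (n - #S) else 0 := by
  have hsplit : ∀ P, ∀ Q ∈ Sᶜ.powerset,
      signWeight S (P ∪ Q) * unanimity T (P ∪ Q) = signWeight S P * unanimity T P := by
    intro P Q hQ
    have hdisj : Disjoint S Q :=
      disjoint_of_subset_right (mem_powerset.mp hQ) disjoint_compl_right
    rw [signWeight_union_of_disjoint hdisj, unanimity_union_of_disjoint (hdisj.mono_left hTS)]
  calc ∑ X, signWeight S X * unanimity T X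
      = ∑ P ∈ S.powerset, 2 ^ (n - #S) * (signWeight S P * unanimity T P) := by
        rw [sum_eq_sum_powerset_sum_powerset_compl S]
        refine sum_congr rfl fun P _ => ?_
        rw [sum_congr rfl (hsplit P), sum_const, card_powerset, card_compl, Fintype.card_fin,
          nsmul_eq_mul]
        push_cast; rfl
    _ = 2 ^ (n - #S) * ∑ P ∈ S.powerset with T ⊆ P, (-1) ^ #(S \ P) := by
        rw [← mul_sum, sum_filter]
        simp only [signWeight, unanimity_eq_ite, mul_ite, mul_one, mul_zero]
    _ = if T = S then 2 ^ (n - #S) else 0 := by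
        rw [sum_powerset_filter_superset_neg_one_pow hTS, mul_ite, mul_one, mul_zero]

lemma sum_signWeight_mul_sum_unanimity (S : Finset (Fin n)) (c : Finset (Fin n) → ℝ) :
    ∑ X, signWeight S X * ∑ T ∈ S.powerset, c T * unanimity T X = 2 ^ (n - #S) * c S := by
  simp only [mul_sum]
  rw [sum_comm]
  calc ∑ T ∈ S.powerset, ∑ X, signWeight S X * (c T * unanimity T X)
      = ∑ T ∈ S.powerset, c T * if T = S then 2 ^ (n - #S) else 0 := by
        refine sum_congr rfl fun T hT => ?_
        rw [← sum_signWeight_mul_unanimity (mem_powerset.mp hT), mul_sum]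
        exact sum_congr rfl fun X _ => by ring
    _ = 2 ^ (n - #S) * c S := by
        simp only [mul_ite, mul_zero, sum_ite_eq', mem_powerset_self, if_true, mul_comm]

end Unanimity

section LeastSquares

variable {ι : Type*} [Fintype ι]

lemma sum_mul_eq_zero_of_forall_sum_sq_le (r v : ι → ℝ)
    (h : ∀ t : ℝ, ∑ i, r i ^ 2 ≤ ∑ i, (r i - t * v i) ^ 2) : ∑ i, r i * v i = 0 := by
  have hquad : ∀ t : ℝ, 0 ≤ (∑ i, v i ^ 2) * (t * t) + (-2 * ∑ i, r i * v i) * t + 0 := by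
    intro t
    have hexpand : ∑ i, (r i - t * v i) ^ 2
        = ∑ i, r i ^ 2 + ((∑ i, v i ^ 2) * (t * t) + (-2 * ∑ i, r i * v i) * t) := by
      simp only [mul_sum, sum_mul, ← sum_add_distrib]
      exact sum_congr rfl fun i _ => by ring
    linarith [h t]
  have hdiscrim := discrim_le_zero hquad
  rw [discrim] at hdiscrim
  nlinarith [sq_nonneg (∑ i, r i * v i)]

lemma sum_residual_mul_eq_zero {κ : Type*} {s : Finset κ} {u : κ → ι → ℝ}
    {f : ι → ℝ} {c : κ → ℝ}
    (hmin : ∀ d : κ → ℝ, ∑ i, (f i - ∑ k ∈ s, c k * u k i) ^ 2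
      ≤ ∑ i, (f i - ∑ k ∈ s, d k * u k i) ^ 2) (d : κ → ℝ) :
    ∑ i, (f i - ∑ k ∈ s, c k * u k i) * ∑ k ∈ s, d k * u k i = 0 := by
  refine sum_mul_eq_zero_of_forall_sum_sq_le _ _ fun t => ?_
  convert hmin (c + t • d) using 3 with i
  simp only [Pi.add_apply, Pi.smul_apply, smul_eq_mul, add_mul, sum_add_distrib, mul_sum,
    mul_assoc]
  ring

end LeastSquares

/-- if `Σ_{T⊆S} c(T) u_T` is the best least-squares approximation of `f`
among all multilinear polynomials depending only on the variables in `S`, then the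
leading coefficient `c(S)` equals the Banzhaf interaction index `I_B(f,S)`. -/
theorem leading_coefficient_of_best_S_approx (n : ℕ) (f : Finset (Fin n) → ℝ)
    (S : Finset (Fin n)) (c : Finset (Fin n) → ℝ)
    (hmin : ∀ d : Finset (Fin n) → ℝ,
        ∑ X : Finset (Fin n), (f X - ∑ T ∈ S.powerset, c T * unanimity T X) ^ 2
          ≤ ∑ X : Finset (Fin n), (f X - ∑ T ∈ S.powerset, d T * unanimity T X) ^ 2) :
    c S = banzhafInteraction f S := by
  have horth := sum_residual_mul_eq_zero hmin fun T => (-1) ^ #(S \ T) * 2 ^ #T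
  simp only [← signWeight_eq_sum_unanimity] at horth
  have hsame : ∑ X, signWeight S X * f X
      = ∑ X, signWeight S X * ∑ T ∈ S.powerset, c T * unanimity T X := by
    rw [← sub_eq_zero, ← sum_sub_distrib, ← horth]
    exact sum_congr rfl fun X _ => by ring
  rw [banzhafInteraction_eq_sum_signWeight, hsame, sum_signWeight_mul_sum_unanimity]
  field_simp
end

section
/- For every pseudo-Boolean function f: {0,1}^n → ℝ, every p ∈ (0,1)^n, and every S ⊆ N, the weighted Banzhaf influence index satisfies Φ_{B,p}(f,S) = Σ_{T⊆S} I_{B,p}(f,T) · (Π_{i∈T}(1−p_i) − (−1)^{|T|} Π_{i∈T} p_i), where I_{B,p}(f,T) = ⟨f, v_{T,p}⟩ / Π_{i∈T}√(p_i(1−p_i)). -/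
/-!
Expanding `f_{S,p}` in the basis `v_{T,p}`, the index is
`Σ_{T⊆S} ⟨f, v_{T,p}⟩ (v_{T,p}(S) − v_{T,p}(∅))`. All factors of `v_{T,p}(S)` have `x_i = 1` and all
factors of `v_{T,p}(∅)` have `x_i = 0`, so both are explicit products over `T` with the common
normalisation `Π_{i∈T} √(p_i(1−p_i))`, which is absorbed into `I_{B,p}(f,T)`.
-/

open Finset

/-- The product probability weight on `2^N`. -/
noncomputable def prodWeight {n : ℕ} (p : Fin n → ℝ) (X : Finset (Fin n)) : ℝ :=
  (∏ i ∈ X, p i) * ∏ i ∈ univ \ X, (1 - p i)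

/-- The weighted basis function `v_{T,p}(x) = Π_{i∈T} (x_i − p_i)/√(p_i(1−p_i))`. -/
noncomputable def vWeighted {n : ℕ} (p : Fin n → ℝ) (T X : Finset (Fin n)) : ℝ :=
  ∏ i ∈ T, ((if i ∈ X then (1 : ℝ) else 0) - p i) / Real.sqrt (p i * (1 - p i))

/-- The weighted inner product `⟨f,g⟩ = Σ_x w(x) f(x) g(x)`. -/
noncomputable def wInner {n : ℕ} (p : Fin n → ℝ) (f g : Finset (Fin n) → ℝ) : ℝ :=
  ∑ X : Finset (Fin n), prodWeight p X * (f X * g X)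

/-- The best `S`-approximation `f_{S,p} = Σ_{T⊆S} ⟨f,v_{T,p}⟩ v_{T,p}`. -/
noncomputable def bestApprox {n : ℕ} (p : Fin n → ℝ) (f : Finset (Fin n) → ℝ)
    (S X : Finset (Fin n)) : ℝ :=
  ∑ T ∈ S.powerset, wInner p f (vWeighted p T) * vWeighted p T X

/-- The weighted Banzhaf influence index `Φ_{B,p}(f,S) = f_{S,p}(S) − f_{S,p}(∅)`. -/
noncomputable def wBanzhafInfluence {n : ℕ} (p : Fin n → ℝ) (f : Finset (Fin n) → ℝ)
    (S : Finset (Fin n)) : ℝ :=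
  bestApprox p f S S - bestApprox p f S ∅

/-- The weighted Banzhaf interaction index
`I_{B,p}(f,T) = ⟨f,v_{T,p}⟩ / Π_{i∈T}√(p_i(1−p_i))`. -/
noncomputable def wBanzhafInteraction {n : ℕ} (p : Fin n → ℝ) (f : Finset (Fin n) → ℝ)
    (T : Finset (Fin n)) : ℝ :=
  wInner p f (vWeighted p T) / ∏ i ∈ T, Real.sqrt (p i * (1 - p i))

theorem vWeighted_of_subset {n : ℕ} (p : Fin n → ℝ) {T X : Finset (Fin n)} (hTX : T ⊆ X) :
    vWeighted p T X = (∏ i ∈ T, (1 - p i)) / ∏ i ∈ T, Real.sqrt (p i * (1 - p i)) := by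
  rw [vWeighted, ← prod_div_distrib]
  exact prod_congr rfl fun i hi => by rw [if_pos (hTX hi)]

theorem vWeighted_of_disjoint {n : ℕ} (p : Fin n → ℝ) {T X : Finset (Fin n)} (hTX : Disjoint T X) :
    vWeighted p T X
      = ((-1 : ℝ) ^ T.card * ∏ i ∈ T, p i) / ∏ i ∈ T, Real.sqrt (p i * (1 - p i)) := by
  have h_neg : ∀ i ∈ T, (if i ∈ X then (1 : ℝ) else 0) - p i = -1 * p i := fun i hi => by
    rw [if_neg (disjoint_left.mp hTX hi)]
    ring
  rw [vWeighted, prod_div_distrib, prod_congr rfl h_neg, prod_mul_distrib, prod_const]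

theorem wBanzhafInfluence_eq_sum_interaction_general (n : ℕ) (p : Fin n → ℝ)
    (f : Finset (Fin n) → ℝ) (S : Finset (Fin n)) :
    wBanzhafInfluence p f S
      = ∑ T ∈ S.powerset, wBanzhafInteraction p f T *
          ((∏ i ∈ T, (1 - p i)) - (-1 : ℝ) ^ T.card * ∏ i ∈ T, p i) := by
  rw [wBanzhafInfluence, bestApprox, bestApprox, ← sum_sub_distrib]
  refine sum_congr rfl fun T hT => ?_
  rw [vWeighted_of_subset p (mem_powerset.mp hT), vWeighted_of_disjoint p (disjoint_empty_right T),
    wBanzhafInteraction]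
  ring

/-- `Φ_{B,p}(f,S) = Σ_{T⊆S} I_{B,p}(f,T) (Π_{i∈T}(1−p_i) − (−1)^{|T|} Π_{i∈T} p_i)`. -/
theorem wBanzhafInfluence_eq_sum_interaction (n : ℕ) (p : Fin n → ℝ)
    (hp : ∀ i, p i ∈ Set.Ioo (0 : ℝ) 1) (f : Finset (Fin n) → ℝ) (S : Finset (Fin n)) :
    wBanzhafInfluence p f S
      = ∑ T ∈ S.powerset, wBanzhafInteraction p f T *
          ((∏ i ∈ T, (1 - p i)) - (-1 : ℝ) ^ T.card * ∏ i ∈ T, p i) :=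
  wBanzhafInfluence_eq_sum_interaction_general n p f S
end
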